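/- The seven three-qubit arrays 0, [1,1,1], [1,1,1]+[2,2,1], [1,1,1]+[2,1,2], [1,1,1]+[1,2,2], [1,1,1]+[1,2,2]+[2,1,2], and [1,1,1]+[2,2,2] lie in pairwise distinct orbits of the action of GL₂(ℝ) × GL₂(ℝ) × GL₂(ℝ): for any two distinct arrays u, u' in this list, there is no triple of invertible 2×2 real matrices (g₁,g₂,g₃) with g·u = u'. In particular, the GHZ state [1,1,1]+[2,2,2] and the W-type state [1,1,1]+[1,2,2]+[2,1,2] are inequivalent. -/

import Mathlib

/-!
Five properties of a `2 × 2 × 2` array are preserved by the action: being zero, each of the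
three flattenings having rank at most one (all `2 × 2` minors between the two slices vanish),
and the vanishing of Cayley's hyperdeterminant, which is multiplied by
`(det g₁ * det g₂ * det g₃) ^ 2`. The seven representatives have pairwise distinct patterns of
these five properties.
-/

/-- The basis array `[a,b,c]`: equal to `1` at index `(a,b,c)` and `0`
elsewhere.  The paper's indices `1, 2` correspond to `0, 1 : Fin 2`. -/
def e (a b c : Fin 2) : Fin 2 → Fin 2 → Fin 2 → ℝ :=
  fun i j k => if i = a ∧ j = b ∧ k = c then 1 else 0

/-- Action of a triple of matrices on a three-qubit coordinate array:
`(g·v) j₁ j₂ j₃ = ∑ k₁ k₂ k₃, v k₁ k₂ k₃ * g₁ k₁ j₁ * g₂ k₂ j₂ * g₃ k₃ j₃`. -/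
def act (g₁ g₂ g₃ : Matrix (Fin 2) (Fin 2) ℝ) (v : Fin 2 → Fin 2 → Fin 2 → ℝ) :
    Fin 2 → Fin 2 → Fin 2 → ℝ :=
  fun j₁ j₂ j₃ => ∑ k₁, ∑ k₂, ∑ k₃, v k₁ k₂ k₃ * g₁ k₁ j₁ * g₂ k₂ j₂ * g₃ k₃ j₃

/-- The seven representative three-qubit arrays: `0`, `[1,1,1]`,
`[1,1,1]+[2,2,1]`, `[1,1,1]+[2,1,2]`, `[1,1,1]+[1,2,2]`,
`[1,1,1]+[1,2,2]+[2,1,2]` (W), and `[1,1,1]+[2,2,2]` (GHZ). -/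
def vs : Fin 7 → (Fin 2 → Fin 2 → Fin 2 → ℝ) :=
  ![0, e 0 0 0, e 0 0 0 + e 1 1 0, e 0 0 0 + e 1 0 1, e 0 0 0 + e 0 1 1,
    e 0 0 0 + e 0 1 1 + e 1 0 1, e 0 0 0 + e 1 1 1]

local notation "Array3" => Fin 2 → Fin 2 → Fin 2 → ℝ

lemma act_act (g₁ g₂ g₃ h₁ h₂ h₃ : Matrix (Fin 2) (Fin 2) ℝ) (v : Array3) :
    act g₁ g₂ g₃ (act h₁ h₂ h₃ v) = act (h₁ * g₁) (h₂ * g₂) (h₃ * g₃) v := by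
  funext j₁ j₂ j₃
  simp only [act, Fin.sum_univ_two, Matrix.mul_apply]
  ring

lemma act_one (v : Array3) : act 1 1 1 v = v := by
  funext j₁ j₂ j₃
  simp only [act, Fin.sum_univ_two, Matrix.one_apply]
  fin_cases j₁ <;> fin_cases j₂ <;> fin_cases j₃ <;> simp

lemma act_zero (g₁ g₂ g₃ : Matrix (Fin 2) (Fin 2) ℝ) : act g₁ g₂ g₃ 0 = 0 := by
  funext j₁ j₂ j₃
  simp [act]

def swap12 (v : Array3) : Array3 := fun i j k => v j i k

def rotate (v : Array3) : Array3 := fun i j k => v j k i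

lemma act_swap12 (g₁ g₂ g₃ : Matrix (Fin 2) (Fin 2) ℝ) (v : Array3) :
    act g₁ g₂ g₃ (swap12 v) = swap12 (act g₂ g₁ g₃ v) := by
  funext j₁ j₂ j₃
  simp only [act, swap12, Fin.sum_univ_two]
  ring

lemma act_rotate (g₁ g₂ g₃ : Matrix (Fin 2) (Fin 2) ℝ) (v : Array3) :
    act g₁ g₂ g₃ (rotate v) = rotate (act g₂ g₃ g₁ v) := by
  funext j₁ j₂ j₃
  simp only [act, rotate, Fin.sum_univ_two]
  ring

lemma iff_act_of_forall_act {P : Array3 → Prop}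
    (hP : ∀ (g₁ g₂ g₃ : Matrix (Fin 2) (Fin 2) ℝ) v, P v → P (act g₁ g₂ g₃ v))
    (g₁ g₂ g₃ : Matrix.GeneralLinearGroup (Fin 2) ℝ) (v : Array3) :
    P (act ↑g₁ ↑g₂ ↑g₃ v) ↔ P v := by
  refine ⟨fun h => ?_, hP _ _ _ v⟩
  have hv : act ↑g₁⁻¹ ↑g₂⁻¹ ↑g₃⁻¹ (act ↑g₁ ↑g₂ ↑g₃ v) = v := by
    simp only [act_act, Units.mul_inv, act_one]
  exact hv ▸ hP _ _ _ _ h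

/-- Cayley's hyperdeterminant. -/
def hyperdet (v : Array3) : ℝ :=
  (v 0 0 0 * v 1 1 1 + v 0 1 1 * v 1 0 0 - v 0 0 1 * v 1 1 0 - v 0 1 0 * v 1 0 1) ^ 2
    - 4 * (v 0 0 0 * v 0 1 1 - v 0 0 1 * v 0 1 0) * (v 1 0 0 * v 1 1 1 - v 1 0 1 * v 1 1 0)

lemma hyperdet_swap12 (v : Array3) : hyperdet (swap12 v) = hyperdet v := by
  simp only [hyperdet, swap12]
  ring

lemma hyperdet_rotate (v : Array3) : hyperdet (rotate v) = hyperdet v := by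
  simp only [hyperdet, rotate]
  ring

lemma hyperdet_act_left (g : Matrix (Fin 2) (Fin 2) ℝ) (v : Array3) :
    hyperdet (act g 1 1 v) = g.det ^ 2 * hyperdet v := by
  simp only [hyperdet, act, Matrix.one_apply, mul_ite, mul_one, mul_zero, Finset.sum_ite_eq',
    Finset.mem_univ, ↓reduceIte, Fin.sum_univ_two, Matrix.det_fin_two]
  ring

lemma hyperdet_act (g₁ g₂ g₃ : Matrix (Fin 2) (Fin 2) ℝ) (v : Array3) :
    hyperdet (act g₁ g₂ g₃ v) = (g₁.det * g₂.det * g₃.det) ^ 2 * hyperdet v := by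
  have hsplit : act g₁ g₂ g₃ v = act g₁ 1 1 (act 1 g₂ 1 (act 1 1 g₃ v)) := by
    simp only [act_act, one_mul, mul_one]
  have hmid (w : Array3) : hyperdet (act 1 g₂ 1 w) = g₂.det ^ 2 * hyperdet w := by
    rw [← hyperdet_swap12, ← act_swap12, hyperdet_act_left, hyperdet_swap12]
  have hlast (w : Array3) : hyperdet (act 1 1 g₃ w) = g₃.det ^ 2 * hyperdet w := by
    rw [← hyperdet_rotate, ← act_rotate, hyperdet_act_left, hyperdet_rotate]
  rw [hsplit, hyperdet_act_left, hmid, hlast]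
  ring

/-- The `2 × 2` minors of the `2 × 4` matrix `(i, (j, k)) ↦ v i j k` vanish. -/
def FlatteningRankLeOne (v : Array3) : Prop :=
  ∀ a b c d : Fin 2, v 0 a b * v 1 c d = v 0 c d * v 1 a b

lemma exists_eq_mul_or_eq_mul_of_cross_eq {ι K : Type*} [Field K] {u w : ι → K}
    (h : ∀ x y, u x * w y = u y * w x) :
    ∃ c : K, (∀ x, w x = c * u x) ∨ (∀ x, u x = c * w x) := by
  by_cases hu : ∀ x, u x = 0
  · exact ⟨0, Or.inr fun x => by rw [hu x, zero_mul]⟩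
  push Not at hu
  obtain ⟨x₀, hx₀⟩ := hu
  refine ⟨w x₀ / u x₀, Or.inl fun x => ?_⟩
  field_simp
  linear_combination h x₀ x

lemma flatteningRankLeOne_act {v : Array3} (hv : FlatteningRankLeOne v)
    (g₁ g₂ g₃ : Matrix (Fin 2) (Fin 2) ℝ) : FlatteningRankLeOne (act g₁ g₂ g₃ v) := by
  obtain ⟨c, hc | hc⟩ := exists_eq_mul_or_eq_mul_of_cross_eq
    (u := fun p : Fin 2 × Fin 2 => v 0 p.1 p.2) (w := fun p => v 1 p.1 p.2)
    (fun p q => hv p.1 p.2 q.1 q.2)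
  all_goals
    intro a b a' b'
    simp only [act, Fin.sum_univ_two, fun a b => hc (a, b)]
    ring

def invariants (v : Array3) : Fin 5 → Prop :=
  ![v = 0, FlatteningRankLeOne v, FlatteningRankLeOne (swap12 v),
    FlatteningRankLeOne (rotate v), hyperdet v = 0]

lemma invariants_act (g₁ g₂ g₃ : Matrix.GeneralLinearGroup (Fin 2) ℝ) (v : Array3) (k : Fin 5) :
    invariants (act ↑g₁ ↑g₂ ↑g₃ v) k ↔ invariants v k := by
  refine iff_act_of_forall_act (P := fun v => invariants v k) ?_ g₁ g₂ g₃ v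
  intro g₁ g₂ g₃ v hv
  fin_cases k
  · simp_all [invariants, act_zero]
  · exact flatteningRankLeOne_act hv g₁ g₂ g₃
  · simpa [invariants, act_swap12] using flatteningRankLeOne_act hv g₂ g₁ g₃
  · simpa [invariants, act_rotate] using flatteningRankLeOne_act hv g₃ g₁ g₂
  · simp_all [invariants, hyperdet_act]

def signature : Fin 7 → Fin 5 → Bool :=
  ![![true, true, true, true, true],
    ![false, true, true, true, true],
    ![false, false, false, true, true],
    ![false, false, true, false, true],
    ![false, true, false, false, true],
    ![false, false, false, false, true],
    ![false, false, false, false, false]]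

set_option maxHeartbeats 400000 in
lemma invariants_vs (i : Fin 7) (k : Fin 5) : invariants (vs i) k ↔ signature i k := by
  fin_cases i <;> fin_cases k <;>
    simp [invariants, signature, vs, e, FlatteningRankLeOne, swap12, rotate, hyperdet,
      Fin.forall_fin_two, funext_iff]

lemma signature_injective : Function.Injective signature := by
  decide

/-- **The seven representative three-qubit states are pairwise inequivalent**
under the action of `GL₂(ℝ) × GL₂(ℝ) × GL₂(ℝ)`.  In particular the GHZ state
and the W state are inequivalent. -/
theorem three_qubit_representatives_pairwise_inequivalent :
    ∀ i j : Fin 7, i ≠ j →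
      ¬ ∃ g₁ g₂ g₃ : Matrix.GeneralLinearGroup (Fin 2) ℝ,
          act (g₁ : Matrix (Fin 2) (Fin 2) ℝ) (g₂ : Matrix (Fin 2) (Fin 2) ℝ)
            (g₃ : Matrix (Fin 2) (Fin 2) ℝ) (vs i) = vs j := by
  rintro i j hij ⟨g₁, g₂, g₃, h⟩
  refine hij (signature_injective (funext fun k => Bool.eq_iff_iff.mpr ?_))
  rw [← invariants_vs, ← invariants_vs, ← h, invariants_act]
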